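/- arXiv:2209.00217 — 3 statements merged into one kernel-verified Lean document; each statement's English description precedes it below -/
import Mathlib

section
/- Let M be a positive integer, h > 0, L := M·h, and let v be a grid function on {0,…,M} with v₀ = v_M = 0. Then the discrete L²-norm satisfies ‖v‖ ≤ (L/√6)·|v|₁. -/
/-!
Let `S` be the sum of the squared differences `(v (j+1) - v j)²`. Telescoping from either end of
the grid and Cauchy–Schwarz bound `v i²` by `i` times the part of `S` left of `i` and by `M - i`
times the part right of `i`; weighting these by `M - i` and `i` and adding gives
`M · v i² ≤ i (M - i) · S`. Summing over `i` with `∑ i (M - i) = (M³ - M)/6 ≤ M³/6` gives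
`∑ v i² ≤ M² S / 6`, which is the claim after scaling by `h`.
-/

open Finset

lemma sum_range_natCast_eq (n : ℕ) : ∑ i ∈ range n, (i : ℝ) = n * (n - 1) / 2 := by
  induction n with
  | zero => simp
  | succ n ih => rw [sum_range_succ, ih]; push_cast; ring

lemma sum_range_succ_mul_sub_eq (n : ℕ) :
    ∑ i ∈ range (n + 1), (i : ℝ) * (n - i) = ((n : ℝ) ^ 3 - n) / 6 := by
  induction n with
  | zero => simp
  | succ n ih =>
    have expand : ∑ i ∈ range (n + 1), (i : ℝ) * ((n + 1 : ℕ) - i) =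
        ∑ i ∈ range (n + 1), (i : ℝ) * (n - i) + ∑ i ∈ range (n + 1), (i : ℝ) := by
      rw [← sum_add_distrib]
      exact sum_congr rfl fun i _ => by push_cast; ring
    rw [sum_range_succ, expand, ih, sum_range_natCast_eq]
    push_cast; ring

lemma sum_Icc_one_eq_sum_range {β : Type*} [AddCommMonoid β] (f : ℕ → β) (n : ℕ) :
    ∑ i ∈ Icc 1 n, f i = ∑ j ∈ range n, f (j + 1) := by
  rw [range_eq_Ico, sum_Ico_add', zero_add, Ico_add_one_right_eq_Icc]

lemma sq_sub_le_mul_sum_sq_sub (v : ℕ → ℝ) {m n : ℕ} (hmn : m ≤ n) :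
    (v n - v m) ^ 2 ≤ ((n : ℝ) - m) * ∑ j ∈ Ico m n, (v (j + 1) - v j) ^ 2 := by
  have hcard : ((#(Ico m n) : ℕ) : ℝ) = n - m := by
    rw [Nat.card_Ico, Nat.cast_sub hmn]
  rw [← sum_Ico_sub (f := v) hmn, ← hcard]
  exact sq_sum_le_card_mul_sum_sq

lemma mul_sq_le_mul_sum_sq_sub {M i : ℕ} (v : ℕ → ℝ) (hv0 : v 0 = 0) (hvM : v M = 0)
    (hiM : i ≤ M) :
    M * v i ^ 2 ≤ i * (M - i) * ∑ j ∈ range M, (v (j + 1) - v j) ^ 2 := by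
  have hleft := sq_sub_le_mul_sum_sq_sub v (Nat.zero_le i)
  have hright := sq_sub_le_mul_sum_sq_sub v hiM
  rw [hv0, sub_zero, Nat.cast_zero, sub_zero] at hleft
  rw [hvM, zero_sub, neg_sq] at hright
  have hi : (0 : ℝ) ≤ i := i.cast_nonneg
  have hMi : (0 : ℝ) ≤ M - i := sub_nonneg.2 (by exact_mod_cast hiM)
  rw [range_eq_Ico, ← sum_Ico_consecutive _ (Nat.zero_le i) hiM]
  calc (M : ℝ) * v i ^ 2 = (M - i) * v i ^ 2 + i * v i ^ 2 := by ring
    _ ≤ (M - i) * (i * ∑ j ∈ Ico 0 i, (v (j + 1) - v j) ^ 2)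
        + i * ((M - i) * ∑ j ∈ Ico i M, (v (j + 1) - v j) ^ 2) := by
      gcongr
    _ = _ := by ring

theorem discrete_poincare (M : ℕ) (v : ℕ → ℝ) (hv0 : v 0 = 0) (hvM : v M = 0) :
    6 * ∑ i ∈ range (M + 1), v i ^ 2 ≤ (M : ℝ) ^ 2 * ∑ j ∈ range M, (v (j + 1) - v j) ^ 2 := by
  rcases M.eq_zero_or_pos with rfl | hM
  · simp [hv0]
  set S := ∑ j ∈ range M, (v (j + 1) - v j) ^ 2
  have hS : 0 ≤ S := sum_nonneg fun j _ => sq_nonneg _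
  have hM' : (0 : ℝ) < M := by exact_mod_cast hM
  have hpointwise : M * ∑ i ∈ range (M + 1), v i ^ 2 ≤ ((M : ℝ) ^ 3 - M) / 6 * S := by
    rw [mul_sum, ← sum_range_succ_mul_sub_eq, sum_mul]
    exact sum_le_sum fun i hi =>
      mul_sq_le_mul_sum_sq_sub v hv0 hvM (Nat.lt_succ_iff.1 (mem_range.1 hi))
  refine le_of_mul_le_mul_left ?_ hM'
  nlinarith

theorem stmt_1_general (M : ℕ) (h L : ℝ) (hh : 0 < h) (hL : L = M * h)
    (v : ℕ → ℝ) (hv0 : v 0 = 0) (hvM : v M = 0) :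
    Real.sqrt (h * ∑ i ∈ Finset.Icc 1 (M - 1), (v i) ^ 2) ≤
      L / Real.sqrt 6 *
        Real.sqrt (h * ∑ i ∈ Finset.Icc 1 M, ((v i - v (i - 1)) / h) ^ 2) := by
  set S := ∑ j ∈ range M, (v (j + 1) - v j) ^ 2
  have hdiff : ∑ i ∈ Icc 1 M, ((v i - v (i - 1)) / h) ^ 2 = S / h ^ 2 := by
    simp only [sum_Icc_one_eq_sum_range, Nat.add_sub_cancel, div_pow, S, sum_div]
  have hinterior : ∑ i ∈ Icc 1 (M - 1), v i ^ 2 ≤ ∑ i ∈ range (M + 1), v i ^ 2 :=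
    sum_le_sum_of_subset_of_nonneg (fun i hi => by simp only [mem_Icc, mem_range] at *; omega)
      fun i _ _ => sq_nonneg _
  have hpoincare := discrete_poincare M v hv0 hvM
  have hsq : h * ∑ i ∈ Icc 1 (M - 1), v i ^ 2 ≤ (L / Real.sqrt 6) ^ 2 * (h * (S / h ^ 2)) := by
    rw [div_pow, Real.sq_sqrt (by norm_num), hL]
    calc h * ∑ i ∈ Icc 1 (M - 1), v i ^ 2 ≤ h * ((M : ℝ) ^ 2 * S / 6) := by gcongr; linarith
      _ = _ := by field_simp
  have hL0 : 0 ≤ L / Real.sqrt 6 := by rw [hL]; positivity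
  calc _ ≤ Real.sqrt ((L / Real.sqrt 6) ^ 2 * (h * (S / h ^ 2))) := Real.sqrt_le_sqrt hsq
    _ = _ := by rw [Real.sqrt_mul (sq_nonneg _), Real.sqrt_sq hL0, hdiff]

/-- Discrete Poincaré-type inequality: for a grid function `v` on `{0,…,M}` vanishing at
the endpoints, the discrete `L²`-norm `‖v‖ = (h ∑_{i=1}^{M-1} vᵢ²)^{1/2}` is bounded by
`(L/√6)·|v|₁`, where `L = M·h`. -/
theorem stmt_1 (M : ℕ) (hM : 0 < M) (h L : ℝ) (hh : 0 < h) (hL : L = M * h)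
    (v : ℕ → ℝ) (hv0 : v 0 = 0) (hvM : v M = 0) :
    Real.sqrt (h * ∑ i ∈ Finset.Icc 1 (M - 1), (v i) ^ 2) ≤
      L / Real.sqrt 6 *
        Real.sqrt (h * ∑ i ∈ Finset.Icc 1 M, ((v i - v (i - 1)) / h) ^ 2) :=
  stmt_1_general M h L hh hL v hv0 hvM
end

section
/- Let M be a positive integer, h > 0 and τ > 0. Let u, u′, w, w′ be grid functions on {0,…,M} vanishing at i = 0 and i = M, and let R, R′ be grid functions on {0,…,M}, such that wᵢ = δₓ²uᵢ − (h²/12)·δₓ²wᵢ + Rᵢ and w′ᵢ = δₓ²u′ᵢ − (h²/12)·δₓ²w′ᵢ + R′ᵢ for 1 ≤ i ≤ M−1. Then ⟨(w+w′)/2, (u−u′)/τ⟩ = −(1/(2τ))·[(|u|₁² − |u′|₁²) + (h²/12)·(‖w‖² − ‖w′‖²) − (h⁴/144)·(|w|₁² − |w′|₁²)] + (h²/12)·⟨(w+w′)/2, (R−R′)/τ⟩ + ⟨(R+R′)/2, (u−u′)/τ⟩. -/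
/-- The second difference quotient `δₓ²vᵢ = (v_{i+1} - 2vᵢ + v_{i-1})/h²`. -/
noncomputable def dx2 (h : ℝ) (v : ℕ → ℝ) (i : ℕ) : ℝ :=
  (v (i + 1) - 2 * v i + v (i - 1)) / h ^ 2

/-- The discrete inner product `⟨u,v⟩ = h ∑_{i=1}^{M-1} uᵢ vᵢ`. -/
noncomputable def inn (M : ℕ) (h : ℝ) (u v : ℕ → ℝ) : ℝ :=
  h * ∑ i ∈ Finset.Icc 1 (M - 1), u i * v i

/-- The squared discrete `H¹`-seminorm `|v|₁² = h ∑_{i=1}^{M} ((vᵢ - v_{i-1})/h)²`. -/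
noncomputable def sem1sq (M : ℕ) (h : ℝ) (v : ℕ → ℝ) : ℝ :=
  h * ∑ i ∈ Finset.Icc 1 M, ((v i - v (i - 1)) / h) ^ 2

/-- The squared discrete `L²`-norm `‖v‖² = h ∑_{i=1}^{M-1} vᵢ²`. -/
noncomputable def normsq (M : ℕ) (h : ℝ) (v : ℕ → ℝ) : ℝ :=
  h * ∑ i ∈ Finset.Icc 1 (M - 1), (v i) ^ 2

noncomputable def bil (M : ℕ) (h : ℝ) (a b : ℕ → ℝ) : ℝ :=
  h * ∑ i ∈ Finset.Icc 1 M, ((a i - a (i - 1)) / h) * ((b i - b (i - 1)) / h)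

lemma abel (M : ℕ) (hM : 1 ≤ M) (D b : ℕ → ℝ) :
    ∑ i ∈ Finset.Icc 1 (M - 1), (D (i + 1) - D i) * b i
      + ∑ i ∈ Finset.Icc 1 M, D i * (b i - b (i - 1))
    = D M * b M - D 1 * b 0 := by
  induction M, hM using Nat.le_induction with
  | base => simp; ring
  | succ n hn ih =>
    obtain ⟨k, rfl⟩ : ∃ k, n = k + 1 := ⟨n - 1, by omega⟩
    rw [show k + 1 + 1 - 1 = k + 1 from rfl,
        Finset.sum_Icc_succ_top (by omega : 1 ≤ k + 1),
        Finset.sum_Icc_succ_top (by omega : 1 ≤ k + 2)]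
    simp only [Nat.add_sub_cancel] at ih ⊢
    linear_combination ih

lemma sbp (M : ℕ) (hM : 0 < M) (h : ℝ) (hh : h ≠ 0) (a b : ℕ → ℝ)
    (hb0 : b 0 = 0) (hbM : b M = 0) :
    inn M h (dx2 h a) b = - bil M h a b := by
  have habel := abel M hM (fun i => a i - a (i - 1)) b
  rw [hb0, hbM] at habel
  simp only [mul_zero, zero_sub, sub_zero] at habel
  have e1 : ∑ i ∈ Finset.Icc 1 (M - 1), dx2 h a i * b i
      = (1 / h ^ 2) * ∑ i ∈ Finset.Icc 1 (M - 1),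
          ((fun i => a i - a (i - 1)) (i + 1) - (fun i => a i - a (i - 1)) i) * b i := by
    rw [Finset.mul_sum]
    refine Finset.sum_congr rfl fun i hi => ?_
    simp only [dx2, Nat.add_sub_cancel]
    ring
  have e2 : ∑ i ∈ Finset.Icc 1 M, ((a i - a (i - 1)) / h) * ((b i - b (i - 1)) / h)
      = (1 / h ^ 2) * ∑ i ∈ Finset.Icc 1 M, (fun i => a i - a (i - 1)) i * (b i - b (i - 1)) := by
    rw [Finset.mul_sum]
    refine Finset.sum_congr rfl fun i hi => ?_
    ring
  unfold inn bil
  rw [e1, e2]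
  linear_combination (h / h ^ 2) * habel

lemma inn_comm (M : ℕ) (h : ℝ) (f g : ℕ → ℝ) : inn M h f g = inn M h g f := by
  simp [inn, mul_comm]

lemma inn_congr_left (M : ℕ) (h : ℝ) (f g v : ℕ → ℝ)
    (hfg : ∀ i ∈ Finset.Icc 1 (M - 1), f i = g i) :
    inn M h f v = inn M h g v := by
  unfold inn
  congr 1
  exact Finset.sum_congr rfl fun i hi => by rw [hfg i hi]

lemma inn_split (M : ℕ) (h : ℝ) (c d : ℝ) (f g r v : ℕ → ℝ) :
    inn M h (fun i => f i + c * g i + d * r i) v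
      = inn M h f v + c * inn M h g v + d * inn M h r v := by
  simp only [inn, Finset.mul_sum]
  rw [← Finset.sum_add_distrib, ← Finset.sum_add_distrib]
  exact Finset.sum_congr rfl fun i _ => by ring

lemma bil_comm (M : ℕ) (h : ℝ) (f g : ℕ → ℝ) : bil M h f g = bil M h g f := by
  simp [bil, mul_comm]

lemma bil_polar (M : ℕ) (h τ : ℝ) (a b : ℕ → ℝ) :
    bil M h (fun i => (a i + b i) / 2) (fun i => (a i - b i) / τ)
      = 1 / (2 * τ) * (sem1sq M h a - sem1sq M h b) := by
  unfold bil sem1sq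
  rw [show (∑ i ∈ Finset.Icc 1 M,
        (((fun i => (a i + b i) / 2) i - (fun i => (a i + b i) / 2) (i - 1)) / h)
          * (((fun i => (a i - b i) / τ) i - (fun i => (a i - b i) / τ) (i - 1)) / h))
      = ∑ i ∈ Finset.Icc 1 M,
        (1 / (2 * τ)) * (((a i - a (i - 1)) / h) ^ 2 - ((b i - b (i - 1)) / h) ^ 2)
      from Finset.sum_congr rfl fun i _ => by ring]
  rw [← Finset.mul_sum, Finset.sum_sub_distrib]
  ring

lemma inn_polar (M : ℕ) (h τ : ℝ) (a b : ℕ → ℝ) :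
    inn M h (fun i => (a i + b i) / 2) (fun i => (a i - b i) / τ)
      = 1 / (2 * τ) * (normsq M h a - normsq M h b) := by
  unfold inn normsq
  rw [show (∑ i ∈ Finset.Icc 1 (M - 1),
        (fun i => (a i + b i) / 2) i * (fun i => (a i - b i) / τ) i)
      = ∑ i ∈ Finset.Icc 1 (M - 1), (1 / (2 * τ)) * ((a i) ^ 2 - (b i) ^ 2)
      from Finset.sum_congr rfl fun i _ => by ring]
  rw [← Finset.mul_sum, Finset.sum_sub_distrib]
  ring

/-- Energy identity for two consecutive time levels of the compact relation
`w = δₓ²u - (h²/12)δₓ²w + R`: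
`⟨(w+w')/2, (u-u')/τ⟩ = -(1/2τ)[(|u|₁² - |u'|₁²) + (h²/12)(‖w‖² - ‖w'‖²)
  - (h⁴/144)(|w|₁² - |w'|₁²)] + (h²/12)⟨(w+w')/2, (R-R')/τ⟩ + ⟨(R+R')/2, (u-u')/τ⟩`. -/
theorem stmt_9 (M : ℕ) (hM : 0 < M) (h τ : ℝ) (hh : 0 < h) (hτ : 0 < τ)
    (u u' w w' R R' : ℕ → ℝ)
    (hu0 : u 0 = 0) (huM : u M = 0) (hu'0 : u' 0 = 0) (hu'M : u' M = 0)
    (hw0 : w 0 = 0) (hwM : w M = 0) (hw'0 : w' 0 = 0) (hw'M : w' M = 0)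
    (hrel : ∀ i, 1 ≤ i → i ≤ M - 1 → w i = dx2 h u i - h ^ 2 / 12 * dx2 h w i + R i)
    (hrel' : ∀ i, 1 ≤ i → i ≤ M - 1 → w' i = dx2 h u' i - h ^ 2 / 12 * dx2 h w' i + R' i) :
    inn M h (fun i => (w i + w' i) / 2) (fun i => (u i - u' i) / τ)
      = -(1 / (2 * τ)) * ((sem1sq M h u - sem1sq M h u')
          + h ^ 2 / 12 * (normsq M h w - normsq M h w')
          - h ^ 4 / 144 * (sem1sq M h w - sem1sq M h w'))
        + h ^ 2 / 12 * inn M h (fun i => (w i + w' i) / 2) (fun i => (R i - R' i) / τ)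
        + inn M h (fun i => (R i + R' i) / 2) (fun i => (u i - u' i) / τ) := by
  have hh' : h ≠ 0 := ne_of_gt hh
  have hτ' : τ ≠ 0 := ne_of_gt hτ
  set δu : ℕ → ℝ := fun i => (u i - u' i) / τ with hδu
  set W : ℕ → ℝ := fun i => (w i + w' i) / 2 with hW
  have hδu0 : δu 0 = 0 := by simp [hδu, hu0, hu'0]
  have hδuM : δu M = 0 := by simp [hδu, huM, hu'M]
  have hW0 : W 0 = 0 := by simp [hW, hw0, hw'0]
  have hWM : W M = 0 := by simp [hW, hwM, hw'M]
  -- Step 1: substitute the compact relation into the left-hand side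
  have step1 : inn M h W δu
      = inn M h (dx2 h (fun i => (u i + u' i) / 2)) δu
        + (-(h ^ 2 / 12)) * inn M h (dx2 h W) δu
        + 1 * inn M h (fun i => (R i + R' i) / 2) δu := by
    rw [← inn_split]
    apply inn_congr_left
    intro i hi
    simp only [Finset.mem_Icc] at hi
    have h1 := hrel i hi.1 hi.2
    have h2 := hrel' i hi.1 hi.2
    simp only [hW, dx2] at h1 h2 ⊢
    linear_combination h1 / 2 + h2 / 2
  -- Step 2: the first term
  have eA : inn M h (dx2 h (fun i => (u i + u' i) / 2)) δu
      = -(1 / (2 * τ) * (sem1sq M h u - sem1sq M h u')) := by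
    rw [sbp M hM h hh' _ δu hδu0 hδuM, hδu, bil_polar]
  -- Step 3: the middle term
  have flip : inn M h (dx2 h W) δu = inn M h (dx2 h δu) W := by
    rw [sbp M hM h hh' W δu hδu0 hδuM, sbp M hM h hh' δu W hW0 hWM, bil_comm]
  have step3 : inn M h (dx2 h δu) W
      = inn M h (fun i => (w i - w' i) / τ) W
        + (h ^ 2 / 12) * inn M h (dx2 h (fun i => (w i - w' i) / τ)) W
        + (-1) * inn M h (fun i => (R i - R' i) / τ) W := by
    rw [← inn_split]
    apply inn_congr_left
    intro i hi
    simp only [Finset.mem_Icc] at hi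
    have h1 := hrel i hi.1 hi.2
    have h2 := hrel' i hi.1 hi.2
    simp only [hδu, dx2] at h1 h2 ⊢
    linear_combination h2 / τ - h1 / τ
  have t1 : inn M h (fun i => (w i - w' i) / τ) W
      = 1 / (2 * τ) * (normsq M h w - normsq M h w') := by
    rw [inn_comm, hW, inn_polar]
  have t2 : inn M h (dx2 h (fun i => (w i - w' i) / τ)) W
      = -(1 / (2 * τ) * (sem1sq M h w - sem1sq M h w')) := by
    rw [sbp M hM h hh' _ W hW0 hWM, bil_comm, hW, bil_polar]
  have t3 : inn M h (fun i => (R i - R' i) / τ) W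
      = inn M h W (fun i => (R i - R' i) / τ) := inn_comm _ _ _ _
  have eB : inn M h (dx2 h W) δu
      = 1 / (2 * τ) * (normsq M h w - normsq M h w')
        - h ^ 2 / 12 * (1 / (2 * τ) * (sem1sq M h w - sem1sq M h w'))
        - inn M h W (fun i => (R i - R' i) / τ) := by
    rw [flip, step3, t1, t2, t3]; ring
  rw [step1, eA, eB]
  ring
end

section
/- Let a ∈ ℝ, h > 0, and let f be six times continuously differentiable on [a−h, a+h]. Define Q := f″(a) + (h²/12)·(f″(a+h) − 2f″(a) + f″(a−h))/h² − (f(a+h) − 2f(a) + f(a−h))/h². Then |Q| ≤ (7/720)·(max_{[a−h,a+h]} |f⁽⁶⁾|)·h⁴. -/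
/-!
Expand `f` to order five and `f''` to order three around `a`, in both directions, with
Lagrange remainders. In the combination `Q` every Taylor coefficient cancels (this is what
the weight `h²/12` is chosen for), leaving
`Q = h⁴/288 · (f⁽⁶⁾(η₁) + f⁽⁶⁾(η₂)) - h⁴/720 · (f⁽⁶⁾(ξ₁) + f⁽⁶⁾(ξ₂))`,
whence `|Q| ≤ (2/288 + 2/720) K h⁴ = 7/720 · K h⁴`.
-/

open Set Nat

section IteratedDerivWithin

variable {𝕜 F : Type*} [NontriviallyNormedField 𝕜] [NormedAddCommGroup F] [NormedSpace 𝕜 F]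
  {f : 𝕜 → F} {s t : Set 𝕜}

theorem iteratedDerivWithin_iteratedDerivWithin (k m : ℕ) (f : 𝕜 → F) (s : Set 𝕜) :
    iteratedDerivWithin k (iteratedDerivWithin m f s) s = iteratedDerivWithin (k + m) f s := by
  have iterate (n : ℕ) (g : 𝕜 → F) :
      iteratedDerivWithin n g s = (fun g : 𝕜 → F => derivWithin g s)^[n] g :=
    funext fun _ => iteratedDerivWithin_eq_iterate
  rw [iterate, iterate, iterate, Function.iterate_add_apply]

theorem ContDiffOn.iteratedDerivWithin {n k : WithTop ℕ∞} {m : ℕ} (hf : ContDiffOn 𝕜 n f s)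
    (hs : UniqueDiffOn 𝕜 s) (hkm : k + m ≤ n) :
    ContDiffOn 𝕜 k (iteratedDerivWithin m f s) s := by
  induction m generalizing k with
  | zero => simpa using hf.of_le (by simpa using hkm)
  | succ m ih =>
    rw [iteratedDerivWithin_succ]
    refine (ih (k := k + 1) ?_).derivWithin hs le_rfl
    rwa [Nat.cast_succ, add_comm (m : WithTop ℕ∞) 1, ← add_assoc] at hkm

theorem iteratedDerivWithin_subset {n : ℕ} {x : 𝕜} (st : s ⊆ t) (hs : UniqueDiffOn 𝕜 s)
    (ht : UniqueDiffOn 𝕜 t) (hf : ContDiffOn 𝕜 n f t) (hx : x ∈ s) :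
    iteratedDerivWithin n f s x = iteratedDerivWithin n f t x := by
  simp only [iteratedDerivWithin_eq_iteratedFDerivWithin,
    iteratedFDerivWithin_subset st hs ht hf hx]

end IteratedDerivWithin

theorem exists_taylor_lagrange_of_uIcc_subset {f : ℝ → ℝ} {s : Set ℝ} {x₀ x : ℝ} {n : ℕ}
    (hs : UniqueDiffOn ℝ s) (hsub : uIcc x₀ x ⊆ s) (hx : x₀ ≠ x)
    (hf : ContDiffOn ℝ (n + 1) f s) :
    ∃ ξ ∈ s, f x = ∑ k ∈ Finset.range (n + 1), iteratedDerivWithin k f s x₀ * (x - x₀) ^ k / k !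
      + iteratedDerivWithin (n + 1) f s ξ * (x - x₀) ^ (n + 1) / (n + 1)! := by
  have hI : UniqueDiffOn ℝ (uIcc x₀ x) := uniqueDiffOn_Icc (min_lt_max.2 hx)
  have restrict {k : ℕ} (hk : k ≤ n + 1) {y : ℝ} (hy : y ∈ uIcc x₀ x) :
      iteratedDerivWithin k f (uIcc x₀ x) y = iteratedDerivWithin k f s y :=
    iteratedDerivWithin_subset hsub hI hs (hf.of_le (by exact_mod_cast hk)) hy
  have hfI := hf.mono hsub
  obtain ⟨ξ, hξ, hrem⟩ := taylor_mean_remainder_lagrange (n := n) hx (hfI.of_le (by simp))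
    ((hfI.differentiableOn_iteratedDerivWithin (by norm_cast; omega) hI).mono
      uIoo_subset_uIcc_self)
  refine ⟨ξ, hsub (uIoo_subset_uIcc_self hξ), ?_⟩
  rw [← sub_eq_iff_eq_add', ← restrict le_rfl (uIoo_subset_uIcc_self hξ), ← hrem,
    taylor_within_apply]
  congr 1
  refine Finset.sum_congr rfl fun k hk => ?_
  rw [smul_eq_mul, restrict (Finset.mem_range.1 hk).le left_mem_uIcc]
  ring

/-- Fourth-order truncation error of the compact approximation of the second derivative:
for `f` six times continuously differentiable on `[a-h, a+h]` with `|f⁽⁶⁾| ≤ K` there,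
the quantity `Q := f''(a) + (h²/12)·δₓ²f''(a) - δₓ²f(a)` satisfies
`|Q| ≤ (7/720)·K·h⁴`. -/
theorem stmt_13 (a h : ℝ) (hh : 0 < h) (f : ℝ → ℝ)
    (hf : ContDiffOn ℝ 6 f (Set.Icc (a - h) (a + h)))
    (K : ℝ)
    (hK : ∀ x ∈ Set.Icc (a - h) (a + h),
      |iteratedDerivWithin 6 f (Set.Icc (a - h) (a + h)) x| ≤ K) :
    |iteratedDerivWithin 2 f (Set.Icc (a - h) (a + h)) a
        + h ^ 2 / 12 *
          ((iteratedDerivWithin 2 f (Set.Icc (a - h) (a + h)) (a + h)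
              - 2 * iteratedDerivWithin 2 f (Set.Icc (a - h) (a + h)) a
              + iteratedDerivWithin 2 f (Set.Icc (a - h) (a + h)) (a - h)) / h ^ 2)
        - (f (a + h) - 2 * f a + f (a - h)) / h ^ 2|
      ≤ 7 / 720 * K * h ^ 4 := by
  set s := Icc (a - h) (a + h)
  have hs : UniqueDiffOn ℝ s := uniqueDiffOn_Icc (by linarith)
  have ha : a ∈ s := ⟨by linarith, by linarith⟩
  have hright : uIcc a (a + h) ⊆ s := uIcc_subset_Icc ha ⟨by linarith, le_rfl⟩
  have hleft : uIcc a (a - h) ⊆ s := uIcc_subset_Icc ha ⟨le_rfl, by linarith⟩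
  have hf'' : ContDiffOn ℝ (3 + 1) (iteratedDerivWithin 2 f s) s :=
    hf.iteratedDerivWithin hs (by norm_num)
  have hf' : ContDiffOn ℝ (5 + 1) f s := hf.of_le (by norm_num)
  obtain ⟨ξ₁, hξ₁, hfR⟩ := exists_taylor_lagrange_of_uIcc_subset hs hright (by linarith) hf'
  obtain ⟨ξ₂, hξ₂, hfL⟩ := exists_taylor_lagrange_of_uIcc_subset hs hleft (by linarith) hf'
  obtain ⟨η₁, hη₁, hphR⟩ := exists_taylor_lagrange_of_uIcc_subset hs hright (by linarith) hf''
  obtain ⟨η₂, hη₂, hphL⟩ := exists_taylor_lagrange_of_uIcc_subset hs hleft (by linarith) hf''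
  simp only [Finset.sum_range_succ, Finset.sum_range_zero, iteratedDerivWithin_iteratedDerivWithin,
    iteratedDerivWithin_zero] at hfR hfL hphR hphL
  norm_num [Nat.factorial] at hfR hfL hphR hphL
  have hK' {x} (hx : x ∈ s) := abs_le.1 (hK x hx)
  have hh4 : 0 ≤ h ^ 4 := by positivity
  calc _ = |h ^ 4 / 288 * (iteratedDerivWithin 6 f s η₁ + iteratedDerivWithin 6 f s η₂)
          - h ^ 4 / 720 * (iteratedDerivWithin 6 f s ξ₁ + iteratedDerivWithin 6 f s ξ₂)| := by
        congr 1
        field_simp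
        linear_combination 288 * 720 * (h ^ 2 * (hphR + hphL) - 12 * (hfR + hfL))
    _ ≤ 7 / 720 * K * h ^ 4 := by
        rw [abs_le]
        constructor <;> nlinarith [hK' hξ₁, hK' hξ₂, hK' hη₁, hK' hη₂]
end
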